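/- arXiv:2012.13218 — 2 statements merged into one kernel-verified Lean document; each statement's English description precedes it below -/
import Mathlib

section
/- Let z ∈ ℂ with Im z ≠ 0. Then there exists a unique m ∈ ℂ satisfying m² + z·m + 1 = 0 and Im(m)·Im(z) > 0; equivalently m satisfies -1/m = z + m. Moreover this m equals the Stieltjes transform ∫_{-2}^{2} ρ_sc(x)/(x - z) dx of the semicircle density ρ_sc(x) = √(4-x²)/(2π). -/
open MeasureTheory

/-- The semicircle density `ρ_sc(x) = √(4 - x²)/(2π)`. -/
noncomputable def semicircleDensity (x : ℝ) : ℝ := Real.sqrt (4 - x ^ 2) / (2 * Real.pi)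

open Complex in
private theorem keyalg (w v a b : ℂ) (hwv : w * v = 1) (hab : a * b = 1)
    (h1 : 1 - a * v ≠ 0) (h2 : 1 - w * b⁻¹ ≠ 0) (hden : w + v - (a + b) ≠ 0) :
    w + (a + b) + v + (a - b) * (1 + a * v / (1 - a * v))
      + (b - a) * (-(w * b⁻¹) / (1 - w * b⁻¹))
      = (v - w) ^ 2 / (w + v - (a + b)) := by
  have hw : w ≠ 0 := left_ne_zero_of_mul_eq_one hwv
  have ha : a ≠ 0 := left_ne_zero_of_mul_eq_one hab
  have hv : v = w⁻¹ := eq_inv_of_mul_eq_one_right (by linear_combination hwv)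
  have hbb : b = a⁻¹ := eq_inv_of_mul_eq_one_right (by linear_combination hab)
  subst hv hbb
  rw [inv_inv] at h2 ⊢
  have h1' : w - a ≠ 0 := by
    intro h
    have haw : a = w := by linear_combination -h
    rw [haw, mul_inv_cancel₀ hw] at h1
    exact h1 (sub_self 1)
  have hq : w * a - 1 ≠ 0 := by
    intro h; apply h2; linear_combination -h
  have hdeq : w + w⁻¹ - (a + a⁻¹) = (w * a - 1) * (w - a) * (w⁻¹ * a⁻¹) := by
    field_simp; ring
  rw [hdeq]
  have e1 : 1 - a * w⁻¹ = (w - a) * w⁻¹ := by field_simp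
  rw [e1]
  field_simp
  ring


open Complex in
private theorem integral_h (z a b : ℂ) (hab : a * b = 1) (habz : a + b = z)
    (ha : ‖a‖ < 1) (hb : 1 < ‖b‖) (hzim : z.im ≠ 0) :
    ∫ θ in (0:ℝ)..(2*Real.pi),
      ((Real.sin θ : ℂ))^2 / (2*(Real.cos θ:ℂ) - z) = -(Real.pi : ℂ) * a := by
  subst habz
  have hbne : b ≠ 0 := right_ne_zero_of_mul_eq_one hab
  have hden : ∀ θ : ℝ, 2*(Real.cos θ:ℂ) - (a+b) ≠ 0 := by
    intro θ h
    apply hzim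
    have h2 := congrArg Complex.im h
    simp at h2
    simp only [Complex.add_im]
    linarith
  set Φ : ℝ → ℂ := fun t => (I/4) * (Complex.exp ((t:ℂ)*I) + I*(a+b)*(t:ℂ)
      - Complex.exp (-((t:ℂ)*I))
      + (a-b) * ((t:ℂ)*I + Complex.log (1 - a * Complex.exp (-((t:ℂ)*I))))
      + (b-a) * Complex.log (1 - Complex.exp ((t:ℂ)*I) * b⁻¹)) with hΦ
  have hderiv : ∀ θ : ℝ, HasDerivAt Φ
      (((Real.sin θ : ℂ))^2 / (2*(Real.cos θ:ℂ) - (a+b))) θ := by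
    intro θ
    set w : ℂ := Complex.exp ((θ:ℂ)*I) with hw
    set v : ℂ := Complex.exp (-((θ:ℂ)*I)) with hv
    have hwv : w * v = 1 := by
      rw [hw, hv, ← Complex.exp_add]; simp
    have h1 : HasDerivAt (fun t : ℝ => ((t:ℂ))) 1 θ := Complex.ofRealCLM.hasDerivAt
    have hlin : HasDerivAt (fun t : ℝ => (t:ℂ)*I) I θ := by simpa using h1.mul_const I
    have hlinneg : HasDerivAt (fun t : ℝ => -((t:ℂ)*I)) (-I) θ := hlin.neg
    have d_exp : HasDerivAt (fun t : ℝ => Complex.exp ((t:ℂ)*I)) (w*I) θ := hlin.cexp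
    have d_expn : HasDerivAt (fun t : ℝ => Complex.exp (-((t:ℂ)*I))) (v * -I) θ :=
      hlinneg.cexp
    have d_lin : HasDerivAt (fun t : ℝ => I*(a+b)*(t:ℂ)) (I*(a+b)) θ := by
      simpa using h1.const_mul (I*(a+b))
    have hmem1 : 1 - a * v ∈ Complex.slitPlane := by
      rw [sub_eq_add_neg]
      apply Complex.mem_slitPlane_of_norm_lt_one
      simp only [norm_neg]
      calc ‖a * v‖ = ‖a‖ * ‖v‖ := by simp
        _ < 1 := by
          rw [hv]
          simp [Complex.norm_exp]
          exact ha
    have h1ne : 1 - a * v ≠ 0 := Complex.slitPlane_ne_zero hmem1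
    have d_in1 := (d_expn.const_mul a).const_sub 1
    have d_log1 := d_in1.clog_real hmem1
    have hmem2 : 1 - w * b⁻¹ ∈ Complex.slitPlane := by
      rw [sub_eq_add_neg]
      apply Complex.mem_slitPlane_of_norm_lt_one
      simp only [norm_neg]
      have habs : ‖w * b⁻¹‖ = (‖b‖)⁻¹ := by
        rw [hw]; simp [Complex.norm_exp]
      rw [habs, inv_lt_one_iff₀]; right; exact hb
    have h2ne : 1 - w * b⁻¹ ≠ 0 := Complex.slitPlane_ne_zero hmem2
    have d_in2 := (d_exp.mul_const b⁻¹).const_sub 1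
    have d_log2 := d_in2.clog_real hmem2
    have base := (((d_exp.add d_lin).sub d_expn).add
      ((hlin.add d_log1).const_mul (a-b))).add (d_log2.const_mul (b-a))
    rw [← hv, ← hw] at base
    have dΦ := base.const_mul (I/4)
    rw [hΦ]
    refine dΦ.congr_deriv (Eq.symm ?_)
    -- algebra: the stated derivative equals the combinator value
    have hsin : (Real.sin θ : ℂ) = (v - w) * I / 2 := by
      rw [Complex.ofReal_sin, Complex.sin, hv, hw, neg_mul]
    have hcos : (Real.cos θ : ℂ) = (w + v) / 2 := by
      rw [Complex.ofReal_cos, Complex.cos, hv, hw, neg_mul]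
    have hdenne : w + v - (a + b) ≠ 0 := by
      have hd := hden θ
      rw [hcos] at hd
      intro h; apply hd; linear_combination h
    have halg := keyalg w v a b hwv hab h1ne h2ne hdenne
    rw [hsin, hcos]
    have e2 : ((v - w) * I / 2)^2 = -((v - w)^2)/4 := by
      rw [div_pow, mul_pow, Complex.I_sq]; ring
    rw [e2]
    have e3 : (2:ℂ) * ((w + v) / 2) - (a+b) = w + v - (a + b) := by ring
    rw [e3]
    have e5 : -((v - w)^2)/4/(w + v - (a+b)) = -((v - w)^2/(w + v - (a+b)))/4 := by
      ring
    rw [e5, ← halg]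
    linear_combination ((w + (a + b) + v + (a - b) * (1 + a * v / (1 - a * v))
      + (b - a) * (-(w * b⁻¹) / (1 - w * b⁻¹)))/4
      + (-w/2 - w*a*b⁻¹*(1 - w*b⁻¹)⁻¹/2 + w*b*b⁻¹*(1 - w*b⁻¹)⁻¹/2 - a
        + a*b*v*(1 - a*v)⁻¹/2 - a^2*v*(1 - a*v)⁻¹/2 - v/2)) * Complex.I_mul_I
  have hcont : Continuous (fun θ : ℝ => ((Real.sin θ : ℂ))^2 / (2*(Real.cos θ:ℂ) - (a+b))) := by
    apply Continuous.div
    · exact (Complex.continuous_ofReal.comp Real.continuous_sin).pow 2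
    · exact Continuous.sub (by continuity) continuous_const
    · exact hden
  have hint := intervalIntegral.integral_eq_sub_of_hasDerivAt
    (f := Φ) (a := (0:ℝ)) (b := 2*Real.pi)
    (fun θ _ => hderiv θ) (hcont.intervalIntegrable _ _)
  rw [hint]
  have he2pi : Complex.exp (2*(Real.pi:ℂ)*I) = 1 := Complex.exp_two_pi_mul_I
  have he2pin : Complex.exp (-(2*(Real.pi:ℂ)*I)) = 1 := by
    rw [Complex.exp_neg, he2pi, inv_one]
  rw [hΦ]
  push_cast
  simp only [he2pi, he2pin, Complex.ofReal_zero, zero_mul, neg_zero, Complex.exp_zero,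
    mul_zero, one_mul, mul_one, zero_add]
  linear_combination ((2*(Real.pi:ℂ))*(a+b+a-b)/4) * Complex.I_mul_I

open Complex in
private theorem stieltjes_eq (z a b : ℂ) (hab : a * b = 1) (habz : a + b = z)
    (ha : ‖a‖ < 1) (hb : 1 < ‖b‖) (hzim : z.im ≠ 0) :
    (∫ x in (-2 : ℝ)..2, (semicircleDensity x : ℂ) / ((x : ℂ) - z)) = -a := by
  set G : ℝ → ℂ := fun x => (semicircleDensity x : ℂ) / ((x : ℂ) - z) with hG
  have hGden : ∀ x : ℝ, ((x:ℂ) - z) ≠ 0 := by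
    intro x h
    apply hzim
    have h2 := congrArg Complex.im h
    simpa using h2.symm
  have hGcont : Continuous G := by
    apply Continuous.div
    · apply Complex.continuous_ofReal.comp
      unfold semicircleDensity
      apply Continuous.div_const
      exact Real.continuous_sqrt.comp (by continuity)
    · continuity
    · exact hGden
  set h : ℝ → ℂ := fun θ => ((Real.sin θ : ℂ))^2 / (2*(Real.cos θ:ℂ) - z) with hh
  have hden : ∀ θ : ℝ, 2*(Real.cos θ:ℂ) - z ≠ 0 := by
    intro θ hc
    apply hzim
    have h2 := congrArg Complex.im hc
    simpa using h2.symm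
  have hcont : Continuous h := by
    apply Continuous.div
    · exact (Complex.continuous_ofReal.comp Real.continuous_sin).pow 2
    · exact Continuous.sub (by continuity) continuous_const
    · exact hden
  -- substitution x = 2 cos θ
  have hsub := intervalIntegral.integral_comp_smul_deriv
    (a := (0:ℝ)) (b := Real.pi)
    (f := fun θ : ℝ => 2*Real.cos θ) (f' := fun θ : ℝ => 2*(-Real.sin θ)) (g := G)
    (fun x _ => (Real.hasDerivAt_cos x).const_mul 2)
    (by fun_prop) hGcont
  simp only [Real.cos_zero, mul_one, Real.cos_pi] at hsub
  have h2m : (2:ℝ)*(-1) = -2 := by norm_num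
  rw [h2m] at hsub
  rw [intervalIntegral.integral_symm (-2:ℝ) 2] at hsub
  have hflip : (∫ x in (-2:ℝ)..2, G x)
      = ∫ θ in (0:ℝ)..Real.pi, (2*Real.sin θ) • G (2*Real.cos θ) := by
    have h1 : (∫ x in (-2:ℝ)..2, G x)
        = -∫ x in (0:ℝ)..Real.pi, (2 * -Real.sin x) • (G ∘ fun θ => 2*Real.cos θ) x := by
      rw [hsub, neg_neg]
    rw [h1, ← intervalIntegral.integral_neg]
    apply intervalIntegral.integral_congr
    intro θ _
    simp only [Function.comp]
    rw [← neg_smul]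
    congr 1
    ring
  -- pointwise identity on [0, π]
  have hpt : ∀ θ ∈ Set.uIcc (0:ℝ) Real.pi,
      (2*Real.sin θ) • G (2*Real.cos θ) = (2/Real.pi) • h θ := by
    intro θ hθ
    rw [Set.uIcc_of_le Real.pi_pos.le] at hθ
    have hsin : 0 ≤ Real.sin θ := Real.sin_nonneg_of_nonneg_of_le_pi hθ.1 hθ.2
    have hsq : 4 - (2*Real.cos θ)^2 = (2*Real.sin θ)^2 := by
      nlinarith [Real.sin_sq_add_cos_sq θ]
    have hsqrt : Real.sqrt (4 - (2*Real.cos θ)^2) = 2*Real.sin θ := by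
      rw [hsq]; exact Real.sqrt_sq (by linarith)
    rw [hG, hh]
    simp only [semicircleDensity, hsqrt, Complex.real_smul]
    push_cast
    have hpi : (Real.pi : ℂ) ≠ 0 := by exact_mod_cast Real.pi_ne_zero
    have hd := hden θ
    field_simp
  have hstep1 : (∫ x in (-2:ℝ)..2, G x) = (2/Real.pi) • ∫ θ in (0:ℝ)..Real.pi, h θ := by
    rw [hflip, intervalIntegral.integral_congr hpt, intervalIntegral.integral_smul]
  -- doubling
  have hrefl : (∫ θ in Real.pi..(2*Real.pi), h θ) = ∫ θ in (0:ℝ)..Real.pi, h θ := by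
    have hc := intervalIntegral.integral_comp_sub_left (a := (0:ℝ)) (b := Real.pi) h
      (2*Real.pi)
    have : (2*Real.pi - Real.pi) = Real.pi := by ring
    rw [this, sub_zero] at hc
    rw [← hc]
    apply intervalIntegral.integral_congr
    intro θ _
    rw [hh]
    simp [Real.cos_two_pi_sub, Real.sin_two_pi_sub]
  have hdouble : (∫ θ in (0:ℝ)..(2*Real.pi), h θ) = 2 * ∫ θ in (0:ℝ)..Real.pi, h θ := by
    rw [← intervalIntegral.integral_add_adjacent_intervals
      (hcont.intervalIntegrable 0 Real.pi) (hcont.intervalIntegrable Real.pi (2*Real.pi)),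
      hrefl]
    ring
  have hval := integral_h z a b hab habz ha hb hzim
  rw [← hh] at hval
  rw [hstep1]
  have hhalf : (∫ θ in (0:ℝ)..Real.pi, h θ) = -(Real.pi:ℂ) * a / 2 := by
    have := hdouble.symm.trans hval
    linear_combination this / 2
  rw [hhalf, Complex.real_smul]
  have hpi : (Real.pi : ℂ) ≠ 0 := by exact_mod_cast Real.pi_ne_zero
  push_cast
  field_simp

open Complex in
private theorem exists_ab (z : ℂ) (hz : z.im ≠ 0) :
    ∃ a b : ℂ, a * b = 1 ∧ a + b = z ∧ ‖a‖ < 1 ∧ 1 < ‖b‖ := by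
  obtain ⟨s, hs⟩ := IsAlgClosed.exists_pow_nat_eq (k := ℂ) (z^2 - 4) (n := 2) (by norm_num)
  set r1 : ℂ := (z + s)/2 with hr1
  set r2 : ℂ := (z - s)/2 with hr2
  have hprod : r1 * r2 = 1 := by
    rw [hr1, hr2]; field_simp; linear_combination -hs
  have hsum : r1 + r2 = z := by rw [hr1, hr2]; ring
  have habsne : ∀ r r' : ℂ, r * r' = 1 → r + r' = z → ‖r‖ ≠ 1 := by
    intro r r' hm hsm h1
    apply hz
    have hr' : r' = r⁻¹ := eq_inv_of_mul_eq_one_right hm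
    have hc : r⁻¹ = starRingEnd ℂ r := Complex.inv_eq_conj h1
    rw [← hsm, hr', hc, Complex.add_conj]
    simp
  have hmulabs : ‖r1‖ * ‖r2‖ = 1 := by
    rw [← norm_mul, hprod, norm_one]
  have hr1ne : r1 ≠ 0 := left_ne_zero_of_mul_eq_one hprod
  have hr2ne : r2 ≠ 0 := right_ne_zero_of_mul_eq_one hprod
  have hp1 : 0 < ‖r1‖ := norm_pos_iff.mpr hr1ne
  have hp2 : 0 < ‖r2‖ := norm_pos_iff.mpr hr2ne
  rcases lt_or_gt_of_ne (habsne r1 r2 hprod hsum) with hlt | hgt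
  · exact ⟨r1, r2, hprod, hsum, hlt, by nlinarith⟩
  · refine ⟨r2, r1, by rw [mul_comm]; exact hprod, by rw [add_comm]; exact hsum, by nlinarith, hgt⟩


/-- For `z` with `Im z ≠ 0` there is a unique `m ∈ ℂ` with
`m² + z m + 1 = 0` and `Im(m)·Im(z) > 0`; this `m` satisfies `-1/m = z + m` and equals
the Stieltjes transform of the semicircle density. -/
theorem semicircle_stieltjes_characterization (z : ℂ) (hz : z.im ≠ 0) :
    ∃ m : ℂ,
      (m ^ 2 + z * m + 1 = 0 ∧ m.im * z.im > 0) ∧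
      (∀ m' : ℂ, m' ^ 2 + z * m' + 1 = 0 ∧ m'.im * z.im > 0 → m' = m) ∧
      (m ≠ 0 ∧ -(1 / m) = z + m) ∧
      m = ∫ x in (-2 : ℝ)..2, (semicircleDensity x : ℂ) / ((x : ℂ) - z) := by
  obtain ⟨a, b, hab, habz, ha, hb⟩ := exists_ab z hz
  have hane : a ≠ 0 := left_ne_zero_of_mul_eq_one hab
  have hbinv : b = a⁻¹ := eq_inv_of_mul_eq_one_right hab
  have hnsq : 0 < Complex.normSq a := Complex.normSq_pos.mpr hane
  have hnsq1 : Complex.normSq a < 1 := by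
    rw [Complex.normSq_eq_norm_sq]; nlinarith [norm_nonneg a]
  refine ⟨-a, ⟨?_, ?_⟩, ?_, ⟨neg_ne_zero.mpr hane, ?_⟩, ?_⟩
  · linear_combination a * habz - hab
  · -- sign condition
    have hzim_eq : z.im = a.im * (Complex.normSq a - 1) / Complex.normSq a := by
      rw [← habz, hbinv, Complex.add_im, Complex.inv_im]
      field_simp
      ring
    have haim : a.im ≠ 0 := by
      intro h0
      apply hz
      rw [hzim_eq, h0]; simp
    rw [Complex.neg_im, hzim_eq]
    have e : -a.im * (a.im * (Complex.normSq a - 1) / Complex.normSq a)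
        = a.im^2 * (1 - Complex.normSq a) / Complex.normSq a := by ring
    rw [e]
    apply div_pos _ hnsq
    apply mul_pos (pow_two_pos_of_ne_zero haim)
    linarith
  · -- uniqueness
    intro m' ⟨hq', hs'⟩
    have hq : (-a) ^ 2 + z * (-a) + 1 = 0 := by linear_combination a * habz - hab
    have hfac : (m' - (-a)) * (m' + (-a) + z) = 0 := by linear_combination hq' - hq
    rcases mul_eq_zero.mp hfac with h0 | h0
    · exact sub_eq_zero.mp h0
    · exfalso
      have hm' : m' = -b := by linear_combination h0 + habz
      -- sign contradiction
      have hzim_eq : z.im = a.im * (Complex.normSq a - 1) / Complex.normSq a := by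
        rw [← habz, hbinv, Complex.add_im, Complex.inv_im]
        field_simp
        ring
      have haim : a.im ≠ 0 := by
        intro h0'
        apply hz
        rw [hzim_eq, h0']; simp
      have him' : m'.im = a.im / Complex.normSq a := by
        rw [hm', hbinv, Complex.neg_im, Complex.inv_im]
        ring
      rw [him', hzim_eq] at hs'
      have e : a.im / Complex.normSq a * (a.im * (Complex.normSq a - 1) / Complex.normSq a)
          = a.im^2 * (Complex.normSq a - 1) / (Complex.normSq a * Complex.normSq a) := by
        ring
      rw [e] at hs'
      have hneg : a.im^2 * (Complex.normSq a - 1) / (Complex.normSq a * Complex.normSq a) ≤ 0 := by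
        apply div_nonpos_of_nonpos_of_nonneg
        · apply mul_nonpos_of_nonneg_of_nonpos (sq_nonneg _)
          linarith
        · positivity
      linarith
  · -- -1/m = z + m
    have hm0 : (-a) ≠ 0 := neg_ne_zero.mpr hane
    rw [← habz, hbinv]
    field_simp
    ring
  · exact (stieltjes_eq z a b hab habz ha hb hz).symm
end

section
/- For every continuous function f : [-2,2] → ℝ, the limit lim_{ε→0⁺} ∫_{-2}^{2} f(x) · ε(2−ε) / (π √(4−x²) · (ε² + (1−ε)x²)) dx = f(0) holds. -/
open MeasureTheory Filter Set intervalIntegral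

noncomputable def pkK (ε x : ℝ) : ℝ :=
  ε * (2 - ε) / (Real.pi * Real.sqrt (4 - x ^ 2) * (ε ^ 2 + (1 - ε) * x ^ 2))

lemma pk_denom_pos {ε : ℝ} (hε : 0 < ε) (hε1 : ε < 1) (x : ℝ) :
    0 < ε ^ 2 + (1 - ε) * x ^ 2 := by nlinarith [sq_nonneg x, sq_nonneg ε]

lemma pkK_nonneg {ε : ℝ} (hε : 0 < ε) (hε1 : ε < 1) (x : ℝ) : 0 ≤ pkK ε x := by
  unfold pkK
  apply div_nonneg (by nlinarith)
  have := Real.sqrt_nonneg (4 - x ^ 2)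
  have := (pk_denom_pos hε hε1 x).le
  positivity

lemma pkK_measurable (ε : ℝ) : Measurable (pkK ε) := by
  unfold pkK
  exact measurable_const.div
    (((continuous_const.mul ((continuous_const.sub (continuous_pow 2)).sqrt)).mul
      (continuous_const.add (continuous_const.mul (continuous_pow 2)))).measurable)

lemma pkK_le {ε : ℝ} (hε : 0 < ε) (hε1 : ε < 1) (x : ℝ) :
    pkK ε x ≤ (2 / (Real.pi * ε)) * (Real.sqrt (4 - x ^ 2))⁻¹ := by
  rcases (Real.sqrt_nonneg (4 - x ^ 2)).eq_or_lt with h | h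
  · unfold pkK
    rw [← h, inv_zero, mul_zero, mul_zero, zero_mul, div_zero]
  · have hD := pk_denom_pos hε hε1 x
    have hπ := Real.pi_pos
    unfold pkK
    rw [← div_eq_mul_inv, div_div, div_le_div_iff₀ (by positivity) (by positivity)]
    nlinarith [mul_pos hπ h,
      mul_nonneg (mul_nonneg hπ.le h.le) (by nlinarith [sq_nonneg x] : (0:ℝ) ≤ 2 * (1 - ε) * x ^ 2 + ε ^ 3)]

lemma pk_x2K_le {ε : ℝ} (hε : 0 < ε) (hε1 : ε < 1) (x : ℝ) :
    x ^ 2 * pkK ε x ≤ (ε * (2 - ε) / ((1 - ε) * Real.pi)) * (Real.sqrt (4 - x ^ 2))⁻¹ := by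
  rcases (Real.sqrt_nonneg (4 - x ^ 2)).eq_or_lt with h | h
  · unfold pkK
    rw [← h, inv_zero, mul_zero, mul_zero, zero_mul, div_zero, mul_zero]
  · have hD := pk_denom_pos hε hε1 x
    have hπ := Real.pi_pos
    have h1 : (0:ℝ) < 1 - ε := by linarith
    unfold pkK
    rw [← div_eq_mul_inv, div_div, mul_div_assoc', div_le_div_iff₀ (by positivity) (by positivity)]
    nlinarith [mul_nonneg (mul_nonneg (mul_nonneg (mul_nonneg hε.le (by linarith : (0:ℝ) ≤ 2 - ε)) hπ.le) h.le) (sq_nonneg ε)]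

lemma pk_sqrt_four : Real.sqrt 4 = 2 := by
  rw [show (4:ℝ) = 2 ^ 2 by norm_num, Real.sqrt_sq (by norm_num : (0:ℝ) ≤ 2)]

lemma pk_arcsin_hasDerivAt {x : ℝ} (hx : x ∈ Ioo (-2 : ℝ) 2) :
    HasDerivAt (fun y : ℝ => Real.arcsin (y / 2)) ((Real.sqrt (4 - x ^ 2))⁻¹) x := by
  have h1 : x / 2 ≠ -1 := by
    intro h; have := hx.1; rw [div_eq_iff (by norm_num : (2:ℝ) ≠ 0)] at h; linarith
  have h2 : x / 2 ≠ 1 := by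
    intro h; have := hx.2; rw [div_eq_iff (by norm_num : (2:ℝ) ≠ 0)] at h; linarith
  have h := (Real.hasDerivAt_arcsin h1 h2).comp x ((hasDerivAt_id x).div_const 2)
  refine h.congr_deriv ?_
  have hs : (0:ℝ) < 4 - x ^ 2 := by nlinarith [hx.1, hx.2]
  have : (1 : ℝ) - (x / 2) ^ 2 = (4 - x ^ 2) / 4 := by ring
  rw [this, Real.sqrt_div hs.le, pk_sqrt_four]
  have hne : Real.sqrt (4 - x ^ 2) ≠ 0 := by positivity
  field_simp

lemma pk_invsqrt_intervalIntegrable :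
    IntervalIntegrable (fun x : ℝ => (Real.sqrt (4 - x ^ 2))⁻¹) volume (-2) 2 := by
  apply intervalIntegrable_deriv_of_nonneg (g := fun y => Real.arcsin (y / 2))
  · exact (Real.continuous_arcsin.comp (continuous_id.div_const 2)).continuousOn
  · intro x hx
    rw [show min (-2:ℝ) 2 = -2 by norm_num, show max (-2:ℝ) 2 = 2 by norm_num] at hx
    exact pk_arcsin_hasDerivAt hx
  · intro x _; positivity

lemma pk_invsqrt_integral :
    ∫ x in (-2:ℝ)..2, (Real.sqrt (4 - x ^ 2))⁻¹ = Real.pi := by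
  have h := intervalIntegral.integral_eq_sub_of_hasDerivAt_of_tendsto
    (f := fun y : ℝ => Real.arcsin (y / 2))
    (f' := fun x : ℝ => (Real.sqrt (4 - x ^ 2))⁻¹)
    (by norm_num : (-2:ℝ) < 2)
    (fun x hx => pk_arcsin_hasDerivAt hx)
    pk_invsqrt_intervalIntegrable
    (by
      have := ((Real.continuous_arcsin.comp (continuous_id.div_const 2)).tendsto (-2)).mono_left
        (nhdsWithin_le_nhds (s := Ioi (-2:ℝ)))
      simpa [Real.arcsin_neg_one, Function.comp_def] using this)
    (by
      have := ((Real.continuous_arcsin.comp (continuous_id.div_const 2)).tendsto 2).mono_left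
        (nhdsWithin_le_nhds (s := Iio (2:ℝ)))
      simpa [Real.arcsin_one, Function.comp_def] using this)
  rw [h]; ring

lemma pk_mul_integrable {ε : ℝ} (hε : 0 < ε) (hε1 : ε < 1) {g : ℝ → ℝ}
    (hg : ContinuousOn g (Icc (-2 : ℝ) 2)) :
    IntervalIntegrable (fun x => g x * pkK ε x) volume (-2) 2 := by
  obtain ⟨M, hM⟩ := isCompact_Icc.exists_bound_of_continuousOn hg
  have hM0 : 0 ≤ M := le_trans (norm_nonneg _) (hM 0 (by norm_num))
  apply IntervalIntegrable.mono_fun'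
    (g := fun x => (M * (2 / (Real.pi * ε))) * (Real.sqrt (4 - x ^ 2))⁻¹)
  · exact pk_invsqrt_intervalIntegrable.const_mul _
  · have h1 : uIoc (-2:ℝ) 2 ⊆ Icc (-2:ℝ) 2 := by
      rw [uIoc_of_le (by norm_num : (-2:ℝ) ≤ 2)]; exact Ioc_subset_Icc_self
    exact ((hg.mono h1).aestronglyMeasurable measurableSet_uIoc).mul
      ((pkK_measurable ε).aestronglyMeasurable)
  · filter_upwards [ae_restrict_mem measurableSet_uIoc] with x hx
    have hxI : x ∈ Icc (-2:ℝ) 2 := by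
      rw [uIoc_of_le (by norm_num : (-2:ℝ) ≤ 2)] at hx; exact Ioc_subset_Icc_self hx
    have h2 : 0 ≤ (Real.sqrt (4 - x ^ 2))⁻¹ := by positivity
    calc ‖g x * pkK ε x‖ = ‖g x‖ * pkK ε x := by
          rw [norm_mul, Real.norm_of_nonneg (pkK_nonneg hε hε1 x)]
      _ ≤ M * ((2 / (Real.pi * ε)) * (Real.sqrt (4 - x ^ 2))⁻¹) := by
          apply mul_le_mul (hM x hxI) (pkK_le hε hε1 x) (pkK_nonneg hε hε1 x) hM0
      _ = (M * (2 / (Real.pi * ε))) * (Real.sqrt (4 - x ^ 2))⁻¹ := by ring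

lemma pkK_intervalIntegrable {ε : ℝ} (hε : 0 < ε) (hε1 : ε < 1) :
    IntervalIntegrable (pkK ε) volume (-2) 2 := by
  have := pk_mul_integrable hε hε1 (g := fun _ => 1) continuousOn_const
  simpa using this
noncomputable def pkG (ε x : ℝ) : ℝ :=
  Real.arctan ((2 - ε) * x / (ε * Real.sqrt (4 - x ^ 2))) / Real.pi

lemma pk_sq_pos {x : ℝ} (hx : x ∈ Ioo (-2 : ℝ) 2) : 0 < 4 - x ^ 2 := by
  nlinarith [hx.1, hx.2]

lemma pkG_hasDerivAt {ε : ℝ} (hε : 0 < ε) (hε1 : ε < 1) {x : ℝ}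
    (hx : x ∈ Ioo (-2 : ℝ) 2) : HasDerivAt (pkG ε) (pkK ε x) x := by
  have hs : 0 < 4 - x ^ 2 := pk_sq_pos hx
  set s := Real.sqrt (4 - x ^ 2) with hsdef
  have hsq : 0 < s := Real.sqrt_pos.2 hs
  have hsq2 : s ^ 2 = 4 - x ^ 2 := Real.sq_sqrt hs.le
  have h1 : HasDerivAt (fun y : ℝ => 4 - y ^ 2) (-(2 * x)) x := by
    simpa using ((hasDerivAt_pow 2 x).const_sub 4)
  have h2 : HasDerivAt (fun y : ℝ => Real.sqrt (4 - y ^ 2))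
      (1 / (2 * s) * -(2 * x)) x :=
    (Real.hasDerivAt_sqrt hs.ne').comp x h1
  have h3 : HasDerivAt (fun y : ℝ => ε * Real.sqrt (4 - y ^ 2))
      (ε * (1 / (2 * s) * -(2 * x))) x := h2.const_mul ε
  have h4 : HasDerivAt (fun y : ℝ => (2 - ε) * y) (2 - ε) x := by
    simpa using (hasDerivAt_id x).const_mul (2 - ε)
  have hden : ε * s ≠ 0 := by positivity
  have h5 := h4.div h3 hden
  have h6 := ((Real.hasDerivAt_arctan _).comp x h5).div_const Real.pi
  have hd := (pk_denom_pos hε hε1 x).ne'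
  have hε2 : (2 : ℝ) - ε ≠ 0 := by linarith
  have c1 : (1 : ℝ) + ((2 - ε) * x / (ε * s)) ^ 2
      = 4 * (ε ^ 2 + (1 - ε) * x ^ 2) / (ε ^ 2 * s ^ 2) := by
    field_simp
    linear_combination ε ^ 2 * hsq2
  have c2 : ((2 - ε) * (ε * s) - (2 - ε) * x * (ε * (1 / (2 * s) * -(2 * x)))) / (ε * s) ^ 2
      = 4 * (2 - ε) / (ε * s ^ 3) := by
    field_simp
    linear_combination hsq2
  refine h6.congr_deriv ?_
  simp only [Pi.div_apply, Function.comp_apply]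
  rw [← hsdef]
  rw [c1, c2]
  unfold pkK
  rw [← hsdef]
  field_simp

lemma pkG_tendsto_right {ε : ℝ} (hε : 0 < ε) (hε1 : ε < 1) :
    Tendsto (pkG ε) (nhdsWithin 2 (Iio 2)) (nhds (1 / 2)) := by
  have hdenom : Tendsto (fun x : ℝ => ε * Real.sqrt (4 - x ^ 2))
      (nhdsWithin 2 (Iio 2)) (nhdsWithin 0 (Ioi 0)) := by
    rw [tendsto_nhdsWithin_iff]
    constructor
    · have hc : Continuous (fun x : ℝ => ε * Real.sqrt (4 - x ^ 2)) :=
        continuous_const.mul ((continuous_const.sub (continuous_pow 2)).sqrt)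
      have := (hc.tendsto 2).mono_left (nhdsWithin_le_nhds (s := Iio (2:ℝ)))
      convert this using 2
      norm_num
    · filter_upwards [Ioo_mem_nhdsLT_of_mem (show (2:ℝ) ∈ Ioc (-2:ℝ) 2 by norm_num)] with x hx
      have := pk_sq_pos hx
      have : 0 < Real.sqrt (4 - x ^ 2) := Real.sqrt_pos.2 this
      exact mul_pos hε this
  have hinv : Tendsto (fun x : ℝ => (ε * Real.sqrt (4 - x ^ 2))⁻¹)
      (nhdsWithin 2 (Iio 2)) atTop := tendsto_inv_nhdsGT_zero.comp hdenom
  have hnum : Tendsto (fun x : ℝ => (2 - ε) * x) (nhdsWithin 2 (Iio 2)) (nhds ((2 - ε) * 2)) :=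
    ((continuous_const.mul continuous_id).tendsto 2).mono_left nhdsWithin_le_nhds
  have hu : Tendsto (fun x : ℝ => (2 - ε) * x / (ε * Real.sqrt (4 - x ^ 2)))
      (nhdsWithin 2 (Iio 2)) atTop := by
    simp only [div_eq_mul_inv]
    exact hnum.pos_mul_atTop (by linarith) hinv
  have harc := (Real.tendsto_arctan_atTop.comp hu).mono_right nhdsWithin_le_nhds
  have := harc.div_const Real.pi
  unfold pkG
  convert this using 2
  · rfl
  field_simp
lemma pkG_tendsto_left {ε : ℝ} (hε : 0 < ε) (hε1 : ε < 1) :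
    Tendsto (pkG ε) (nhdsWithin (-2) (Ioi (-2))) (nhds (-(1 / 2))) := by
  have hdenom : Tendsto (fun x : ℝ => ε * Real.sqrt (4 - x ^ 2))
      (nhdsWithin (-2) (Ioi (-2))) (nhdsWithin 0 (Ioi 0)) := by
    rw [tendsto_nhdsWithin_iff]
    constructor
    · have hc : Continuous (fun x : ℝ => ε * Real.sqrt (4 - x ^ 2)) :=
        continuous_const.mul ((continuous_const.sub (continuous_pow 2)).sqrt)
      have := (hc.tendsto (-2)).mono_left (nhdsWithin_le_nhds (s := Ioi (-2:ℝ)))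
      convert this using 2
      norm_num
    · filter_upwards [Ioo_mem_nhdsGT_of_mem (show (-2:ℝ) ∈ Ico (-2:ℝ) 2 by norm_num)] with x hx
      have := pk_sq_pos hx
      have : 0 < Real.sqrt (4 - x ^ 2) := Real.sqrt_pos.2 this
      exact mul_pos hε this
  have hinv : Tendsto (fun x : ℝ => (ε * Real.sqrt (4 - x ^ 2))⁻¹)
      (nhdsWithin (-2) (Ioi (-2))) atTop := tendsto_inv_nhdsGT_zero.comp hdenom
  have hnum : Tendsto (fun x : ℝ => (2 - ε) * x)
      (nhdsWithin (-2) (Ioi (-2))) (nhds ((2 - ε) * (-2))) :=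
    ((continuous_const.mul continuous_id).tendsto (-2)).mono_left nhdsWithin_le_nhds
  have hu : Tendsto (fun x : ℝ => (2 - ε) * x / (ε * Real.sqrt (4 - x ^ 2)))
      (nhdsWithin (-2) (Ioi (-2))) atBot := by
    simp only [div_eq_mul_inv]
    exact hnum.neg_mul_atTop (by linarith) hinv
  have harc := (Real.tendsto_arctan_atBot.comp hu).mono_right nhdsWithin_le_nhds
  have := harc.div_const Real.pi
  unfold pkG
  convert this using 2
  · rfl
  field_simp

lemma pkK_integral {ε : ℝ} (hε : 0 < ε) (hε1 : ε < 1) :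
    ∫ x in (-2:ℝ)..2, pkK ε x = 1 := by
  have h := intervalIntegral.integral_eq_sub_of_hasDerivAt_of_tendsto
    (f := pkG ε) (f' := pkK ε) (by norm_num : (-2:ℝ) < 2)
    (fun x hx => pkG_hasDerivAt hε hε1 hx)
    (pkK_intervalIntegrable hε hε1)
    (pkG_tendsto_left hε hε1) (pkG_tendsto_right hε hε1)
  rw [h]; norm_num

/-- Poisson-kernel concentration for the arcsine weight: for every
continuous `f : [-2,2] → ℝ`,
`lim_{ε→0⁺} ∫_{-2}^{2} f(x)·ε(2-ε)/(π√(4-x²)(ε² + (1-ε)x²)) dx = f(0)`. -/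
theorem poisson_kernel_concentration (f : ℝ → ℝ)
    (hf : ContinuousOn f (Set.Icc (-2 : ℝ) 2)) :
    Tendsto
      (fun ε : ℝ =>
        ∫ x in (-2 : ℝ)..2,
          f x * (ε * (2 - ε)) /
            (Real.pi * Real.sqrt (4 - x ^ 2) * (ε ^ 2 + (1 - ε) * x ^ 2)))
      (nhdsWithin 0 (Set.Ioi 0)) (nhds (f 0)) := by
  rw [Metric.tendsto_nhds]
  intro η hη
  have h0mem : (0:ℝ) ∈ Icc (-2:ℝ) 2 := by norm_num
  have hcw : ContinuousWithinAt f (Icc (-2:ℝ) 2) 0 := hf 0 h0mem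
  rw [Metric.continuousWithinAt_iff] at hcw
  obtain ⟨δ, hδ, hδf⟩ := hcw (η/3) (by positivity)
  obtain ⟨M, hM⟩ := isCompact_Icc.exists_bound_of_continuousOn hf
  have hM0 : 0 ≤ M := le_trans (norm_nonneg _) (hM 0 h0mem)
  set C : ℝ := (2*M+1)/δ^2 with hCdef
  have hC0 : 0 ≤ C := by positivity
  have hptf : ∀ x ∈ Icc (-2:ℝ) 2, |f x - f 0| ≤ η/3 + C * x^2 := by
    intro x hx
    rcases lt_or_ge (dist x 0) δ with h | h
    · have h2 := hδf hx h
      rw [Real.dist_eq] at h2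
      nlinarith [mul_nonneg hC0 (sq_nonneg x)]
    · have hx2 : δ^2 ≤ x^2 := by
        rw [Real.dist_eq, sub_zero] at h
        nlinarith [abs_nonneg x, sq_abs x]
      have h1 : |f x - f 0| ≤ 2*M + 1 := by
        calc |f x - f 0| = ‖f x - f 0‖ := (Real.norm_eq_abs _).symm
          _ ≤ ‖f x‖ + ‖f 0‖ := norm_sub_le _ _
          _ ≤ 2*M + 1 := by linarith [hM x hx, hM 0 h0mem]
      have h3 : C * δ^2 = 2*M + 1 := by
        rw [hCdef]; field_simp
      have h4 : C * δ^2 ≤ C * x^2 := mul_le_mul_of_nonneg_left hx2 hC0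
      have h5 : (0:ℝ) ≤ η/3 := by positivity
      linarith
  have htail : Tendsto (fun ε : ℝ => C * (ε * (2 - ε)) / (1 - ε))
      (nhdsWithin 0 (Ioi 0)) (nhds 0) := by
    have hcont : ContinuousAt (fun ε : ℝ => C * (ε * (2 - ε)) / (1 - ε)) 0 := by
      apply ContinuousAt.div (by fun_prop) (by fun_prop) (by norm_num)
    have := hcont.tendsto.mono_left (nhdsWithin_le_nhds (s := Ioi (0:ℝ)))
    simpa using this
  have hev := htail.eventually (gt_mem_nhds (show (0:ℝ) < 2*η/3 by positivity))
  filter_upwards [Ioo_mem_nhdsGT_of_mem (show (0:ℝ) ∈ Ico (0:ℝ) 1 by norm_num), hev]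
    with ε hεI hεtail
  obtain ⟨hε, hε1⟩ := hεI
  have hrw : (∫ x in (-2:ℝ)..2, f x * (ε*(2-ε)) /
        (Real.pi * Real.sqrt (4 - x^2) * (ε^2 + (1-ε)*x^2)))
      = ∫ x in (-2:ℝ)..2, f x * pkK ε x := by
    apply intervalIntegral.integral_congr
    intro x _
    simp only [pkK, mul_div_assoc]
  rw [Real.dist_eq, hrw]
  have hfK := pk_mul_integrable hε hε1 hf
  have hK := pkK_intervalIntegrable hε hε1
  have hgK := pk_mul_integrable hε hε1 (g := fun x => f x - f 0) (hf.sub continuousOn_const)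
  have hmass := pkK_integral hε hε1
  have hsplit : (∫ x in (-2:ℝ)..2, f x * pkK ε x) - f 0
      = ∫ x in (-2:ℝ)..2, (f x - f 0) * pkK ε x := by
    have e1 : (∫ x in (-2:ℝ)..2, (f x - f 0) * pkK ε x)
        = (∫ x in (-2:ℝ)..2, f x * pkK ε x) - ∫ x in (-2:ℝ)..2, f 0 * pkK ε x := by
      rw [← intervalIntegral.integral_sub hfK (hK.const_mul (f 0))]
      apply intervalIntegral.integral_congr
      intro x _; ring
    rw [e1, intervalIntegral.integral_const_mul, hmass, mul_one]
  rw [show (∫ x in (-2:ℝ)..2, f x * pkK ε x) - f 0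
      = ∫ x in (-2:ℝ)..2, (f x - f 0) * pkK ε x from hsplit]
  set B : ℝ → ℝ := fun x => (η/3) * pkK ε x
      + (C * (ε*(2-ε)/((1-ε)*Real.pi))) * (Real.sqrt (4-x^2))⁻¹ with hBdef
  have hBint : IntervalIntegrable B volume (-2) 2 :=
    (hK.const_mul _).add (pk_invsqrt_intervalIntegrable.const_mul _)
  have hmono : (∫ x in (-2:ℝ)..2, |(f x - f 0) * pkK ε x|) ≤ ∫ x in (-2:ℝ)..2, B x := by
    apply intervalIntegral.integral_mono_on (by norm_num) hgK.abs hBint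
    intro x hx
    have hKnn := pkK_nonneg hε hε1 x
    rw [abs_mul, abs_of_nonneg hKnn]
    calc |f x - f 0| * pkK ε x ≤ (η/3 + C * x^2) * pkK ε x :=
          mul_le_mul_of_nonneg_right (hptf x hx) hKnn
      _ = (η/3) * pkK ε x + C * (x^2 * pkK ε x) := by ring
      _ ≤ (η/3) * pkK ε x + C * ((ε*(2-ε)/((1-ε)*Real.pi)) * (Real.sqrt (4-x^2))⁻¹) := by
          exact add_le_add_right (mul_le_mul_of_nonneg_left (pk_x2K_le hε hε1 x) hC0) _
      _ = B x := by rw [hBdef]; ring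
  have hBval : (∫ x in (-2:ℝ)..2, B x) = η/3 + C * (ε*(2-ε)) / (1-ε) := by
    rw [hBdef]
    rw [intervalIntegral.integral_add (hK.const_mul _)
      (pk_invsqrt_intervalIntegrable.const_mul _),
      intervalIntegral.integral_const_mul, intervalIntegral.integral_const_mul,
      hmass, pk_invsqrt_integral]
    have hπ : Real.pi ≠ 0 := Real.pi_ne_zero
    have h1ε : (1:ℝ) - ε ≠ 0 := by linarith
    field_simp
  calc |∫ x in (-2:ℝ)..2, (f x - f 0) * pkK ε x|
      ≤ ∫ x in (-2:ℝ)..2, |(f x - f 0) * pkK ε x| :=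
        intervalIntegral.abs_integral_le_integral_abs (by norm_num)
    _ ≤ ∫ x in (-2:ℝ)..2, B x := hmono
    _ = η/3 + C * (ε*(2-ε)) / (1-ε) := hBval
    _ < η/3 + 2*η/3 := by linarith
    _ = η := by ring
end
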